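/- Let Φ be a Young function of class Δ₂ admitting the representation Φ(t) = ∫₀ᵗ φ(s) ds with φ: [0,∞) → [0,∞) nondecreasing, right-continuous, φ(0)=0, φ(s)>0 for s>0, and φ(s) → +∞ as s → +∞. Let g: ℝ^{d×N} → [0,∞) be separately convex (i.e. convex in each of the dN matrix entries when the others are held fixed) and satisfy g(ξ) ≤ β(1+Φ(|ξ|)) for all ξ and some β>0. Then there exists a constant C>0, depending only on d, N, β and Φ, such that |g(ξ) − g(η)| ≤ C·|ξ − η|·(1 + φ(|ξ| + |η|)) for all ξ, η ∈ ℝ^{d×N}. -/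

import Mathlib

open MeasureTheory Filter

noncomputable section

abbrev V3 : Type := Fin 3 → ℝ
abbrev V2 : Type := Fin 2 → ℝ
abbrev M33 : Type := Matrix (Fin 3) (Fin 3) ℝ
abbrev M32 : Type := Matrix (Fin 3) (Fin 2) ℝ

/-- `Φ : [0,∞) → [0,∞)` is a Young function: continuous, convex, positive for `t > 0`,
`Φ(t)/t → 0` as `t → 0⁺` and `Φ(t)/t → ∞` as `t → ∞`. -/
def IsYoung (Φ : ℝ → ℝ) : Prop :=
  ContinuousOn Φ (Set.Ici 0) ∧ ConvexOn ℝ (Set.Ici 0) Φ ∧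
  (∀ t : ℝ, 0 < t → 0 < Φ t) ∧
  Tendsto (fun t => Φ t / t) (nhdsWithin 0 (Set.Ioi 0)) (nhds 0) ∧
  Tendsto (fun t => Φ t / t) atTop atTop

/-- The Δ₂ condition (at infinity). -/
def Delta2 (Φ : ℝ → ℝ) : Prop :=
  ∃ α : ℝ, 0 < α ∧ ∃ t₀ : ℝ, 0 ≤ t₀ ∧ ∀ t, t₀ ≤ t → Φ (2 * t) ≤ α * Φ t

/-- The ∇₂ condition. -/
def Nabla2 (Φ : ℝ → ℝ) : Prop :=
  ∃ β : ℝ, 0 < β ∧ ∃ t₀ : ℝ, 1 < t₀ ∧ ∀ t, t₀ ≤ t → Φ t ≤ (1 / (2 * β)) * Φ (β * t)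

/-- Frobenius norm of a real matrix. -/
def frobNorm {m n : ℕ} (ξ : Matrix (Fin m) (Fin n) ℝ) : ℝ :=
  Real.sqrt (∑ i, ∑ j, (ξ i j) ^ 2)

/-- The open cylinder `(tQ')₁ = (−t/2,t/2)² × (−1/2,1/2)`. -/
def openCyl (t : ℝ) : Set V3 := {x | |x 0| < t / 2 ∧ |x 1| < t / 2 ∧ |x 2| < 1 / 2}

/-- The lateral boundary `∂((−t/2,t/2)²) × (−1/2,1/2)`. -/
def latBdry (t : ℝ) : Set V3 := {x | max |x 0| |x 1| = t / 2 ∧ |x 2| < 1 / 2}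

/-- The (a.e. defined, via Rademacher) matrix of partial derivatives of a Lipschitz map:
row `i`, column `j` is `∂φᵢ/∂xⱼ`. -/
def gradm (φ : V3 → V3) (x : V3) : M33 :=
  Matrix.of fun i j => fderiv ℝ φ x (Pi.single j 1) i

/-- Planar-gradient matrix (3×2) of a map on `ℝ²`. -/
def gradm2 (ψ : V2 → V3) (y : V2) : M32 :=
  Matrix.of fun i j => fderiv ℝ ψ y (Pi.single j 1) i

/-- The 3×3 matrix `(ξ_α + ∇_αφ | ∇₃φ)`: first two columns of `A` shifted by `ξ_α`,
third column untouched. -/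
def withCol (ξα : M32) (A : M33) : M33 :=
  Matrix.of fun i j => (if h : (j : ℕ) < 2 then ξα i ⟨(j : ℕ), h⟩ else 0) + A i j

/-- The admissible class `𝒜_t`: Lipschitz maps vanishing on the lateral boundary. -/
def AdmSet (t : ℝ) : Set (V3 → V3) :=
  {φ | (∃ K : NNReal, LipschitzWith K φ) ∧ ∀ x ∈ latBdry t, φ x = 0}

/-- The constrained admissible class `𝒜_t(V)`: members of `𝒜_t` with values in `V`. -/
def AdmVSet (t : ℝ) (V : Submodule ℝ V3) : Set (V3 → V3) :=
  {φ | φ ∈ AdmSet t ∧ ∀ x, φ x ∈ V}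

/-- The cell energy `∫_{(tQ')₁} f(x, (ξ_α + ∇_αφ | ∇₃φ)) dx`. -/
def cellE (f : V3 → M33 → ℝ) (ξα : M32) (t : ℝ) (φ : V3 → V3) : ℝ :=
  ∫ x in openCyl t, f x (withCol ξα (gradm φ x))

/-- The cell infimum over a class `S` of test maps. -/
def cellInf (f : V3 → M33 → ℝ) (ξα : M32) (t : ℝ) (S : Set (V3 → V3)) : ℝ :=
  sInf ((fun φ => cellE f ξα t φ) '' S)

/-- The constrained tangentially homogenized density `Tf⁰hom(V, ξ_α)`. -/
def Tf0hom (f : V3 → M33 → ℝ) (V : Submodule ℝ V3) (ξα : M32) : ℝ :=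
  liminf (fun t : ℝ => (t ^ 2)⁻¹ * cellInf f ξα t (AdmVSet t V)) atTop

/-- The unconstrained homogenized density (liminf of the scaled cell infima over `𝒜_t`). -/
def homDens (f : V3 → M33 → ℝ) (ξα : M32) : ℝ :=
  liminf (fun t : ℝ => (t ^ 2)⁻¹ * cellInf f ξα t (AdmSet t)) atTop

/-- `P` is the orthogonal projection of `ℝ³` onto the subspace `V` (with respect to the
Euclidean inner product). -/
def IsOrthProjOnto (V : Submodule ℝ V3) (P : V3 → V3) : Prop :=
  IsLinearMap ℝ P ∧ (∀ x, P x ∈ V) ∧ (∀ x ∈ V, P x = x) ∧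
    (∀ x : V3, ∀ v ∈ V, (∑ i, (x i - P x i) * v i) = 0)

/-- Column-wise action `𝐏ξ = (Pξ₁ | Pξ₂ | Pξ₃)` of a projection on 3×3 matrices. -/
def Pmat (P : V3 → V3) (ξ : M33) : M33 :=
  Matrix.of fun i j => P (fun k => ξ k j) i

/-- The penalized integrand `f̄(x,ξ) = f(x,𝐏ξ) + Φ(|ξ − 𝐏ξ|)`. -/
def fbar (Φ : ℝ → ℝ) (P : V3 → V3) (f : V3 → M33 → ℝ) : V3 → M33 → ℝ :=
  fun x ξ => f x (Pmat P ξ) + Φ (frobNorm (ξ - Pmat P ξ))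

/-- Carathéodory function: measurable in `x`, continuous in `ξ`. -/
def Caratheodory (f : V3 → M33 → ℝ) : Prop :=
  (∀ ξ, Measurable fun x => f x ξ) ∧ (∀ x, Continuous fun ξ => f x ξ)

/-- (H1): 1-periodicity in the planar variable. -/
def H1per (f : V3 → M33 → ℝ) : Prop :=
  ∀ (x : V3) (ξ : M33) (i : Fin 3), (i : ℕ) < 2 → f (x + Pi.single i 1) ξ = f x ξ

/-- (H2): `Φ`-coercivity and `Φ`-growth, for a.e. `x` and all `ξ`. -/
def H2growth (Φ : ℝ → ℝ) (α β : ℝ) (f : V3 → M33 → ℝ) : Prop :=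
  ∀ᵐ x : V3 ∂volume, ∀ ξ : M33, α * Φ (frobNorm ξ) ≤ f x ξ ∧ f x ξ ≤ β * (1 + Φ (frobNorm ξ))

/-- `ξ_α ∈ V²`: both columns of the 3×2 matrix belong to `V`. -/
def colsIn (V : Submodule ℝ V3) (ξα : M32) : Prop :=
  ∀ j : Fin 2, (fun i => ξα i j) ∈ V

/-- The open unit square `Q' = (−1/2,1/2)²`. -/
def sq2 : Set V2 := {y | |y 0| < 1 / 2 ∧ |y 1| < 1 / 2}

/-!
Join `η` to `ξ` by changing one matrix entry at a time; every intermediate matrix has norm at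
most `R = |ξ| + |η|`. Along each step `g` is a nonnegative convex function of one real variable,
bounded by `β (1 + Φ (4 r))` on the interval of radius `3 r` (for a suitable `r ≥ R`), so its slope
on the interval of radius `r` is at most `2 β (1 + Φ (4 r)) / r`. Since `Φ t ≤ t φ t` and
`Φ (4 r) ≤ c Φ r` by Δ₂, this slope is `O(1 + φ R)`; summing over the `d N` entries gives the
estimate.
-/

open Set

section Entries

variable {m n : Type*} [DecidableEq m] [DecidableEq n]

def Matrix.updateEntry (A : Matrix m n ℝ) (i : m) (j : n) (a : ℝ) : Matrix m n ℝ :=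
  Matrix.of fun i' j' => if i' = i ∧ j' = j then a else A i' j'

def Matrix.piecewise (S : Finset (m × n)) (A B : Matrix m n ℝ) : Matrix m n ℝ :=
  Matrix.of fun i j => if (i, j) ∈ S then A i j else B i j

def SeparatelyConvex (g : Matrix m n ℝ → ℝ) : Prop :=
  ∀ i j (A : Matrix m n ℝ), ConvexOn ℝ univ fun a => g (A.updateEntry i j a)

@[simp]
theorem Matrix.piecewise_empty (A B : Matrix m n ℝ) : Matrix.piecewise ∅ A B = B := by
  ext; simp [Matrix.piecewise]

theorem Matrix.piecewise_insert (S : Finset (m × n)) (A B : Matrix m n ℝ) (i : m) (j : n) :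
    Matrix.piecewise (insert (i, j) S) A B = (Matrix.piecewise S A B).updateEntry i j (A i j) := by
  ext i' j'
  by_cases h : i' = i ∧ j' = j
  · obtain ⟨rfl, rfl⟩ := h
    simp [Matrix.piecewise, Matrix.updateEntry]
  · simp [Matrix.piecewise, Matrix.updateEntry, h, Prod.ext_iff]

theorem Matrix.updateEntry_piecewise_of_notMem {S : Finset (m × n)} {i : m} {j : n}
    (h : (i, j) ∉ S) (A B : Matrix m n ℝ) :
    (Matrix.piecewise S A B).updateEntry i j (B i j) = Matrix.piecewise S A B := by
  ext i' j'
  by_cases h' : i' = i ∧ j' = j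
  · obtain ⟨rfl, rfl⟩ := h'
    simp [Matrix.piecewise, Matrix.updateEntry, h]
  · simp [Matrix.updateEntry, h']

variable [Fintype m] [Fintype n]

@[simp]
theorem Matrix.piecewise_univ (A B : Matrix m n ℝ) : Matrix.piecewise Finset.univ A B = A := by
  ext; simp [Matrix.piecewise]

theorem abs_sub_le_mul_sum_of_updateEntry {g : Matrix m n ℝ → ℝ} {s : Set (Matrix m n ℝ)}
    {A B : Matrix m n ℝ} {K : ℝ} (hs : ∀ S, Matrix.piecewise S A B ∈ s)
    (hK : ∀ C ∈ s, ∀ i j,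
      |g (C.updateEntry i j (A i j)) - g (C.updateEntry i j (B i j))| ≤ K * |A i j - B i j|) :
    |g A - g B| ≤ K * ∑ p : (m × n), |A p.1 p.2 - B p.1 p.2| := by
  suffices ∀ S, |g (Matrix.piecewise S A B) - g B| ≤ K * ∑ p ∈ S, |A p.1 p.2 - B p.1 p.2| by
    simpa using this Finset.univ
  intro S
  induction S using Finset.induction_on with
  | empty => simp
  | @insert p S hp ih =>
    obtain ⟨i, j⟩ := p
    have hstep := hK _ (hs S) i j
    rw [← Matrix.piecewise_insert, Matrix.updateEntry_piecewise_of_notMem hp] at hstep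
    rw [Finset.sum_insert hp, mul_add]
    exact (abs_sub_le _ _ _).trans (add_le_add hstep ih)

end Entries

section Frobenius

variable {m n : ℕ}

theorem frobNorm_nonneg (A : Matrix (Fin m) (Fin n) ℝ) : 0 ≤ frobNorm A :=
  Real.sqrt_nonneg _

theorem abs_apply_le_frobNorm (A : Matrix (Fin m) (Fin n) ℝ) (i : Fin m) (j : Fin n) :
    |A i j| ≤ frobNorm A := by
  rw [← Real.sqrt_sq_eq_abs]
  refine Real.sqrt_le_sqrt ?_
  calc A i j ^ 2 ≤ ∑ j', A i j' ^ 2 :=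
        Finset.single_le_sum (fun _ _ => sq_nonneg _) (Finset.mem_univ j)
    _ ≤ ∑ i', ∑ j', A i' j' ^ 2 :=
        Finset.single_le_sum (f := fun i' => ∑ j', A i' j' ^ 2)
          (fun _ _ => Finset.sum_nonneg fun _ _ => sq_nonneg _) (Finset.mem_univ i)

theorem sum_abs_le_frobNorm (A : Matrix (Fin m) (Fin n) ℝ) :
    ∑ p : (Fin m × Fin n), |A p.1 p.2| ≤ m * n * frobNorm A := by
  calc ∑ p : (Fin m × Fin n), |A p.1 p.2| ≤ ∑ _p : (Fin m × Fin n), frobNorm A :=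
        Finset.sum_le_sum fun p _ => abs_apply_le_frobNorm A p.1 p.2
    _ = m * n * frobNorm A := by simp [mul_assoc]

theorem frobNorm_le_add_of_sq_le {A B C : Matrix (Fin m) (Fin n) ℝ}
    (h : ∀ i j, A i j ^ 2 ≤ B i j ^ 2 + C i j ^ 2) : frobNorm A ≤ frobNorm B + frobNorm C := by
  have hB : 0 ≤ ∑ i, ∑ j, B i j ^ 2 := by positivity
  have hC : 0 ≤ ∑ i, ∑ j, C i j ^ 2 := by positivity
  have hsum : ∑ i, ∑ j, A i j ^ 2 ≤ (∑ i, ∑ j, B i j ^ 2) + ∑ i, ∑ j, C i j ^ 2 := by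
    simp only [← Finset.sum_add_distrib]
    exact Finset.sum_le_sum fun i _ => Finset.sum_le_sum fun j _ => h i j
  refine Real.sqrt_le_iff.mpr ⟨add_nonneg (frobNorm_nonneg B) (frobNorm_nonneg C), hsum.trans ?_⟩
  simp only [frobNorm]
  nlinarith [Real.sq_sqrt hB, Real.sq_sqrt hC, Real.sqrt_nonneg (∑ i, ∑ j, B i j ^ 2),
    Real.sqrt_nonneg (∑ i, ∑ j, C i j ^ 2)]

theorem frobNorm_updateEntry_le (A : Matrix (Fin m) (Fin n) ℝ) (i : Fin m) (j : Fin n) (a : ℝ) :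
    frobNorm (A.updateEntry i j a) ≤ frobNorm A + |a| := by
  have hsingle : frobNorm ((0 : Matrix (Fin m) (Fin n) ℝ).updateEntry i j a) = |a| := by
    simp [frobNorm, Matrix.updateEntry, ite_pow, ite_and, Real.sqrt_sq_eq_abs]
  rw [← hsingle]
  refine frobNorm_le_add_of_sq_le fun i' j' => ?_
  by_cases h : i' = i ∧ j' = j <;> simp [Matrix.updateEntry, h, sq_nonneg]

theorem frobNorm_piecewise_le (S : Finset (Fin m × Fin n)) (A B : Matrix (Fin m) (Fin n) ℝ) :
    frobNorm (Matrix.piecewise S A B) ≤ frobNorm A + frobNorm B := by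
  refine frobNorm_le_add_of_sq_le fun i j => ?_
  by_cases h : (i, j) ∈ S <;> simp [Matrix.piecewise, h, sq_nonneg]

end Frobenius

section OrliczGrowth

variable {Φ φ : ℝ → ℝ}

theorem Delta2.exists_four_mul_le (hΔ : Delta2 Φ) :
    ∃ c, 0 ≤ c ∧ ∃ t₀, 0 ≤ t₀ ∧ ∀ t, t₀ ≤ t → Φ (4 * t) ≤ c * Φ t := by
  obtain ⟨α, hα, t₀, ht₀, hΔ⟩ := hΔ
  refine ⟨α ^ 2, sq_nonneg α, t₀, ht₀, fun t ht => ?_⟩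
  calc Φ (4 * t) = Φ (2 * (2 * t)) := by ring_nf
    _ ≤ α * Φ (2 * t) := hΔ _ (by linarith)
    _ ≤ α * (α * Φ t) := mul_le_mul_of_nonneg_left (hΔ t ht) hα.le
    _ = α ^ 2 * Φ t := by ring

theorem le_mul_of_eq_intervalIntegral
    (hrep : ∀ t, 0 ≤ t → Φ t = ∫ s in (0 : ℝ)..t, φ s) (hmono : MonotoneOn φ (Ici 0))
    {t : ℝ} (ht : 0 ≤ t) : Φ t ≤ t * φ t := by
  rw [hrep t ht]
  calc ∫ s in (0 : ℝ)..t, φ s ≤ ∫ _ in (0 : ℝ)..t, φ t :=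
        intervalIntegral.integral_mono_on ht
          (hmono.mono fun _ hx => le_trans (le_min le_rfl ht) hx.1).intervalIntegrable
          intervalIntegrable_const
          fun s hs => hmono hs.1 ht hs.2
    _ = t * φ t := by simp

theorem monotoneOn_of_eq_intervalIntegral
    (hrep : ∀ t, 0 ≤ t → Φ t = ∫ s in (0 : ℝ)..t, φ s) (hmono : MonotoneOn φ (Ici 0))
    (hφ0 : φ 0 = 0) : MonotoneOn Φ (Ici 0) := by
  intro s (hs : 0 ≤ s) t (ht : 0 ≤ t) hst
  have hint : ∀ a b, 0 ≤ a → 0 ≤ b → IntervalIntegrable φ MeasureTheory.volume a b :=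
    fun a b ha hb => (hmono.mono fun _ hx => le_trans (le_min ha hb) hx.1).intervalIntegrable
  rw [hrep s hs, hrep t ht, ← intervalIntegral.integral_add_adjacent_intervals
    (hint 0 s le_rfl hs) (hint s t hs ht)]
  have : 0 ≤ ∫ x in s..t, φ x := intervalIntegral.integral_nonneg hst fun x hx =>
    hφ0 ▸ hmono self_mem_Ici (hs.trans hx.1) (hs.trans hx.1)
  linarith

theorem exists_one_add_four_mul_le
    (hrep : ∀ t, 0 ≤ t → Φ t = ∫ s in (0 : ℝ)..t, φ s) (hmono : MonotoneOn φ (Ici 0))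
    (hφ0 : φ 0 = 0) (hΔ : Delta2 Φ) :
    ∃ κ, 0 < κ ∧ ∀ R, 0 ≤ R → ∃ r, R ≤ r ∧ 0 < r ∧ 1 + Φ (4 * r) ≤ κ * r * (1 + φ R) := by
  obtain ⟨c, hc, t₀, ht₀, hΦ4⟩ := hΔ.exists_four_mul_le
  have hφnn : ∀ s, 0 ≤ s → 0 ≤ φ s := fun s hs => hφ0 ▸ hmono self_mem_Ici hs hs
  set T := max t₀ 1
  have hT : 1 ≤ T := le_max_right _ _
  have hφT := hφnn T (by linarith)
  refine ⟨(1 + c) * (1 + φ T), by positivity, fun R hR => ?_⟩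
  set r := max R T
  have hRr : R ≤ r := le_max_left _ _
  have hTr : T ≤ r := le_max_right _ _
  have hφR := hφnn R hR
  have hφr : φ r ≤ φ T + φ R := by
    show φ (max R T) ≤ _
    rcases max_choice R T with h | h <;> rw [h] <;> linarith
  have hΦr : Φ (4 * r) ≤ c * (r * φ r) :=
    (hΦ4 r ((le_max_left _ _).trans hTr)).trans
      (mul_le_mul_of_nonneg_left (le_mul_of_eq_intervalIntegral hrep hmono (by linarith)) hc)
  have hr : 0 ≤ r := by linarith
  refine ⟨r, hRr, by linarith, ?_⟩
  calc 1 + Φ (4 * r) ≤ r + c * r * φ r := by linarith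
    _ ≤ r + c * r * (φ T + φ R) := by gcongr
    _ ≤ (1 + c) * (1 + φ T) * r * (1 + φ R) := by
      nlinarith [mul_nonneg hr hφT, mul_nonneg hr hφR, mul_nonneg hr (mul_nonneg hφT hφR),
        mul_nonneg hr hc, mul_nonneg (mul_nonneg hr hc) (mul_nonneg hφT hφR)]

end OrliczGrowth

theorem SeparatelyConvex.abs_sub_updateEntry_le {m n : ℕ} {g : Matrix (Fin m) (Fin n) ℝ → ℝ}
    {Φ : ℝ → ℝ} {β r : ℝ} (hg : SeparatelyConvex g) (hg0 : ∀ A, 0 ≤ g A)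
    (hgrow : ∀ A, g A ≤ β * (1 + Φ (frobNorm A))) (hΦ : MonotoneOn Φ (Ici 0)) (hβ : 0 ≤ β)
    (hr : 0 < r) {A : Matrix (Fin m) (Fin n) ℝ} (hA : frobNorm A ≤ r) (i : Fin m) (j : Fin n)
    {a b : ℝ} (ha : |a| ≤ r) (hb : |b| ≤ r) :
    |g (A.updateEntry i j a) - g (A.updateEntry i j b)|
      ≤ 2 * (β * (1 + Φ (4 * r))) / r * |a - b| := by
  set M := β * (1 + Φ (4 * r))
  have hbound : ∀ v, dist v 0 < 3 * r → |g (A.updateEntry i j v)| ≤ M := by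
    intro v hv
    rw [Real.dist_0_eq_abs] at hv
    rw [abs_of_nonneg (hg0 _)]
    have hnorm : frobNorm (A.updateEntry i j v) ≤ 4 * r := by
      linarith [frobNorm_updateEntry_le A i j v]
    refine (hgrow _).trans (mul_le_mul_of_nonneg_left ?_ hβ)
    gcongr
    exact hΦ (frobNorm_nonneg _) (by simp only [mem_Ici]; linarith) hnorm
  have hM : 0 ≤ M := (abs_nonneg _).trans (hbound 0 (by simpa using hr))
  have hlip := ((hg i j A).subset (subset_univ _) (convex_ball 0 (3 * r))).lipschitzOnWith_of_abs_le
    hr hbound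
  have hmem : ∀ v : ℝ, |v| ≤ r → v ∈ Metric.ball 0 (3 * r - r) := fun v hv => by
    rw [Metric.mem_ball, Real.dist_0_eq_abs]; linarith
  have := hlip.dist_le_mul a (hmem a ha) b (hmem b hb)
  rwa [Real.dist_eq, Real.dist_eq, Real.coe_toNNReal _ (by positivity)] at this

theorem stmt_7_general
    (d N : ℕ) (Φ φ : ℝ → ℝ) (hΔ : Delta2 Φ)
    (hrep : ∀ t : ℝ, 0 ≤ t → Φ t = ∫ s in (0:ℝ)..t, φ s)
    (hmono : MonotoneOn φ (Set.Ici 0))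
    (hφ0 : φ 0 = 0)
    (β : ℝ) (hβ : 0 < β) :
    ∃ C : ℝ, 0 < C ∧
      ∀ g : Matrix (Fin d) (Fin N) ℝ → ℝ,
        (∀ ξ, 0 ≤ g ξ) →
        (∀ (i : Fin d) (j : Fin N) (ξ : Matrix (Fin d) (Fin N) ℝ),
          ConvexOn ℝ Set.univ (fun s : ℝ =>
            g (Matrix.of fun i' j' => if i' = i ∧ j' = j then s else ξ i' j'))) →
        (∀ ξ, g ξ ≤ β * (1 + Φ (frobNorm ξ))) →
        ∀ ξ η : Matrix (Fin d) (Fin N) ℝ,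
          |g ξ - g η| ≤ C * frobNorm (ξ - η) * (1 + φ (frobNorm ξ + frobNorm η)) := by
  obtain ⟨κ, hκ, hgrowth⟩ := exists_one_add_four_mul_le hrep hmono hφ0 hΔ
  refine ⟨2 * β * κ * (d * N + 1), by positivity, fun g hg0 hgconv hgrow ξ η => ?_⟩
  set R := frobNorm ξ + frobNorm η
  have hR : 0 ≤ R := add_nonneg (frobNorm_nonneg ξ) (frobNorm_nonneg η)
  have hφR : 0 ≤ φ R := hφ0 ▸ hmono self_mem_Ici hR hR
  obtain ⟨r, hRr, hr, hr4⟩ := hgrowth R hR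
  have hK : 2 * (β * (1 + Φ (4 * r))) / r ≤ 2 * β * κ * (1 + φ R) := by
    rw [div_le_iff₀ hr]
    nlinarith [mul_le_mul_of_nonneg_left hr4 (by positivity : (0 : ℝ) ≤ 2 * β)]
  have hentry : ∀ (ζ : Matrix (Fin d) (Fin N) ℝ) i j, frobNorm ζ ≤ R → |ζ i j| ≤ r :=
    fun ζ i j hζ => (abs_apply_le_frobNorm ζ i j).trans (hζ.trans hRr)
  have hchain : |g ξ - g η|
      ≤ 2 * (β * (1 + Φ (4 * r))) / r * ∑ p : (Fin d × Fin N), |ξ p.1 p.2 - η p.1 p.2| :=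
    abs_sub_le_mul_sum_of_updateEntry (s := {ζ | frobNorm ζ ≤ R})
      (fun S => frobNorm_piecewise_le S ξ η) fun ζ hζ i j =>
        SeparatelyConvex.abs_sub_updateEntry_le hgconv hg0 hgrow
          (monotoneOn_of_eq_intervalIntegral hrep hmono hφ0) hβ.le hr (hζ.trans hRr) i j
          (hentry ξ i j (le_add_of_nonneg_right (frobNorm_nonneg η)))
          (hentry η i j (le_add_of_nonneg_left (frobNorm_nonneg ξ)))
  calc |g ξ - g η|
      ≤ 2 * β * κ * (1 + φ R) * ∑ p : (Fin d × Fin N), |ξ p.1 p.2 - η p.1 p.2| :=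
        hchain.trans (mul_le_mul_of_nonneg_right hK (by positivity))
    _ ≤ 2 * β * κ * (1 + φ R) * (d * N * frobNorm (ξ - η)) :=
        mul_le_mul_of_nonneg_left (sum_abs_le_frobNorm (ξ - η)) (by positivity)
    _ ≤ 2 * β * κ * (d * N + 1) * frobNorm (ξ - η) * (1 + φ R) := by
        have := frobNorm_nonneg (ξ - η)
        have : 0 ≤ 2 * β * κ * (1 + φ R) * frobNorm (ξ - η) := by positivity
        nlinarith

/-- locally Lipschitz estimate for separately convex functions with Orlicz
growth; the constant depends only on `d`, `N`, `β` and `Φ`. -/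
theorem stmt_7
    (d N : ℕ) (Φ φ : ℝ → ℝ) (hΦ : IsYoung Φ) (hΔ : Delta2 Φ)
    (hrep : ∀ t : ℝ, 0 ≤ t → Φ t = ∫ s in (0:ℝ)..t, φ s)
    (hmono : MonotoneOn φ (Set.Ici 0))
    (hrc : ∀ s : ℝ, 0 ≤ s → ContinuousWithinAt φ (Set.Ici s) s)
    (hφ0 : φ 0 = 0) (hφpos : ∀ s : ℝ, 0 < s → 0 < φ s)
    (hφtop : Tendsto φ atTop atTop)
    (β : ℝ) (hβ : 0 < β) :
    ∃ C : ℝ, 0 < C ∧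
      ∀ g : Matrix (Fin d) (Fin N) ℝ → ℝ,
        (∀ ξ, 0 ≤ g ξ) →
        (∀ (i : Fin d) (j : Fin N) (ξ : Matrix (Fin d) (Fin N) ℝ),
          ConvexOn ℝ Set.univ (fun s : ℝ =>
            g (Matrix.of fun i' j' => if i' = i ∧ j' = j then s else ξ i' j'))) →
        (∀ ξ, g ξ ≤ β * (1 + Φ (frobNorm ξ))) →
        ∀ ξ η : Matrix (Fin d) (Fin N) ℝ,
          |g ξ - g η| ≤ C * frobNorm (ξ - η) * (1 + φ (frobNorm ξ + frobNorm η)) :=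
  stmt_7_general d N Φ φ hΔ hrep hmono hφ0 β hβ
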